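/- Suppose $\kappa, \tilde{\kappa}$ are smooth strictly convex log-Laplace transforms with critical parameters $\theta^* > \tilde{\theta}^*$, where $\theta^* \kappa'(\theta^*) - \kappa(\theta^*) = 0$ and $\tilde{\theta}^* \tilde{\kappa}'(\tilde{\theta}^*) - \tilde{\kappa}(\tilde{\theta}^*) = 0$. Let $t \in (0,1)$ and suppose $\theta > 0$ minimizes $\phi \mapsto (t\kappa(\phi) + (1-t)\tilde{\kappa}(\phi))/\phi$. Set $a = \kappa'(\theta)$ and $b = \tilde{\kappa}'(\theta)$. Then $\tilde{\theta}^* < \theta < \theta^*$, $\kappa^*(a) < 0 < \tilde{\kappa}^*(b)$, and $t\kappa^*(a) + (1-t)\tilde{\kappa}^*(b) = 0$. -/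

import Mathlib

/-!
Write `h_f(x) = x f'(x) - f(x)`. For convex `f` the tangent line at `θ` lies below `f`, so the
supremum defining `f*(f'(θ))` over `φ > 0` is attained at `φ = θ` and equals `h_f(θ)`. Strict
convexity makes `h_f` strictly increasing on `(0, ∞)`, with zeros `θ*` for `κ` and `θ̃*` for `κ̃`.
The first-order condition for the minimizer of `F(φ)/φ`, `F = tκ + (1-t)κ̃`, is `θ F'(θ) = F(θ)`,
i.e. `t h_κ(θ) + (1-t) h_κ̃(θ) = 0`. So the two values have opposite signs, which by monotonicity
and `θ̃* < θ*` forces `θ̃* < θ < θ*`, `h_κ(θ) < 0 < h_κ̃(θ)`.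
-/

open Set

namespace ConvexOn

variable {S : Set ℝ} {f : ℝ → ℝ} {x y : ℝ}

theorem add_deriv_mul_sub_le (hf : ConvexOn ℝ S f) (hx : x ∈ S) (hy : y ∈ S)
    (hfd : DifferentiableAt ℝ f x) : f x + deriv f x * (y - x) ≤ f y := by
  rcases lt_trichotomy x y with hxy | rfl | hyx
  · have h := hf.deriv_le_slope hx hy hxy hfd
    rw [slope_def_field, le_div_iff₀ (sub_pos.2 hxy)] at h
    linarith
  · simp
  · have h := hf.slope_le_deriv hy hx hyx hfd
    rw [slope_def_field, div_le_iff₀ (sub_pos.2 hyx)] at h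
    linarith

theorem iSup_mul_deriv_sub_eq (hf : ConvexOn ℝ S f) (hx : x ∈ S)
    (hfd : DifferentiableAt ℝ f x) :
    ⨆ φ : S, (φ : ℝ) * deriv f x - f φ = x * deriv f x - f x := by
  have : Nonempty S := ⟨⟨x, hx⟩⟩
  have hle : ∀ φ : S, (φ : ℝ) * deriv f x - f φ ≤ x * deriv f x - f x := fun φ => by
    linarith [hf.add_deriv_mul_sub_le hx φ.2 hfd]
  exact le_antisymm (ciSup_le hle)
    (le_ciSup (f := fun φ : S => (φ : ℝ) * deriv f x - f φ)
      ⟨_, forall_mem_range.2 hle⟩ ⟨x, hx⟩)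

end ConvexOn

theorem StrictConvexOn.strictMonoOn_mul_deriv_sub {S : Set ℝ} {f : ℝ → ℝ}
    (hf : StrictConvexOn ℝ S f) (hfd : ∀ x ∈ S, DifferentiableAt ℝ f x) (hS : S ⊆ Ici 0) :
    StrictMonoOn (fun x => x * deriv f x - f x) S := by
  intro x hx y hy hxy
  have hx0 : 0 ≤ x := hS hx
  have hleft := hf.deriv_lt_slope hx hy hxy (hfd x hx)
  have hright := hf.slope_lt_deriv hx hy hxy (hfd y hy)
  rw [slope_def_field] at hleft hright
  set s := (f y - f x) / (y - x)
  have hs : f y - f x = s * (y - x) := (div_mul_cancel₀ _ (sub_pos.2 hxy).ne').symm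
  -- `h_f(y) - h_f(x) = y (f'(y) - s) + x (s - f'(x))` with `s` the secant slope
  linarith [mul_pos (hx0.trans_lt hxy) (sub_pos.2 hright), mul_nonneg hx0 (sub_pos.2 hleft).le]

theorem IsLocalMin.mul_deriv_sub_eq_zero_of_div {F : ℝ → ℝ} {θ : ℝ}
    (hmin : IsLocalMin (fun φ => F φ / φ) θ) (hF : DifferentiableAt ℝ F θ) (hθ : θ ≠ 0) :
    θ * deriv F θ - F θ = 0 := by
  have h := hmin.hasDerivAt_eq_zero (hF.hasDerivAt.div (hasDerivAt_id θ) hθ)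
  rw [div_eq_zero_iff, or_iff_left (pow_ne_zero 2 hθ)] at h
  simpa [mul_comm] using h

theorem StrictMonoOn.mem_Ioo_of_weighted_sum_eq_zero {α : Type*} [LinearOrder α] {S : Set α}
    {g h : α → ℝ} (hg : StrictMonoOn g S) (hh : StrictMonoOn h S) {x y z : α}
    (hx : x ∈ S) (hy : y ∈ S) (hz : z ∈ S) (hgx : g x = 0) (hhy : h y = 0) (hyx : y < x)
    {t : ℝ} (ht : t ∈ Ioo 0 1) (hsum : t * g z + (1 - t) * h z = 0) :
    z ∈ Ioo y x := by
  obtain ⟨ht0, ht1⟩ := ht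
  have hzx : z < x := by
    by_contra! hxz
    have hgz : 0 ≤ g z := hgx ▸ (hg.le_iff_le hx hz).2 hxz
    have hhz : h z ≤ 0 := by nlinarith
    exact absurd ((hh.le_iff_le hz hy).1 (hhy ▸ hhz)) (not_le.2 (hyx.trans_le hxz))
  have hgz : g z < 0 := hgx ▸ (hg.lt_iff_lt hz hx).2 hzx
  have hhz : 0 < h z := by nlinarith
  exact ⟨(hh.lt_iff_lt hy hz).1 (hhy ▸ hhz), hzx⟩

/-- **Structure of the fast regime (equation (9)):** if `θ* > θ̃*` and `θ` minimizes
`φ ↦ (t κ(φ) + (1-t) κ̃(φ))/φ` over `(0,∞)`, with `a = κ'(θ)`, `b = κ̃'(θ)`, then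
`θ̃* < θ < θ*`, `κ*(a) < 0 < κ̃*(b)` and `t κ*(a) + (1-t) κ̃*(b) = 0`. -/
theorem fast_regime_structure (κ κt : ℝ → ℝ)
    (hκconv : StrictConvexOn ℝ (Set.Ioi 0) κ) (hκtconv : StrictConvexOn ℝ (Set.Ioi 0) κt)
    (hκdiff : ∀ x ∈ Set.Ioi (0 : ℝ), DifferentiableAt ℝ κ x)
    (hκtdiff : ∀ x ∈ Set.Ioi (0 : ℝ), DifferentiableAt ℝ κt x)
    (θs θts : ℝ) (hθs : 0 < θs) (hθts : 0 < θts)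
    (hcrit : θs * deriv κ θs - κ θs = 0)
    (hcritt : θts * deriv κt θts - κt θts = 0)
    (horder : θts < θs)
    (t : ℝ) (ht : t ∈ Set.Ioo (0 : ℝ) 1)
    (θ : ℝ) (hθ : 0 < θ)
    (hmin : ∀ φ : ℝ, 0 < φ →
      (t * κ θ + (1 - t) * κt θ) / θ ≤ (t * κ φ + (1 - t) * κt φ) / φ)
    (a b : ℝ) (ha : a = deriv κ θ) (hb : b = deriv κt θ) :
    (θts < θ ∧ θ < θs) ∧
    (⨆ φ : Set.Ioi (0 : ℝ), ((φ : ℝ) * a - κ φ)) < 0 ∧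
    0 < (⨆ φ : Set.Ioi (0 : ℝ), ((φ : ℝ) * b - κt φ)) ∧
    t * (⨆ φ : Set.Ioi (0 : ℝ), ((φ : ℝ) * a - κ φ))
      + (1 - t) * (⨆ φ : Set.Ioi (0 : ℝ), ((φ : ℝ) * b - κt φ)) = 0 := by
  subst ha hb
  have hmono := hκconv.strictMonoOn_mul_deriv_sub hκdiff Ioi_subset_Ici_self
  have hmonot := hκtconv.strictMonoOn_mul_deriv_sub hκtdiff Ioi_subset_Ici_self
  have hF : HasDerivAt (fun φ => t * κ φ + (1 - t) * κt φ)
      (t * deriv κ θ + (1 - t) * deriv κt θ) θ :=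
    ((hκdiff θ hθ).hasDerivAt.const_mul t).add ((hκtdiff θ hθ).hasDerivAt.const_mul (1 - t))
  have hFmin : IsMinOn (fun φ => (t * κ φ + (1 - t) * κt φ) / φ) (Ioi 0) θ := hmin
  have hfoc : t * (θ * deriv κ θ - κ θ) + (1 - t) * (θ * deriv κt θ - κt θ) = 0 := by
    have h := (hFmin.isLocalMin (Ioi_mem_nhds hθ)).mul_deriv_sub_eq_zero_of_div
      hF.differentiableAt hθ.ne'
    rw [hF.deriv] at h
    linear_combination h
  have hθmem : θ ∈ Ioo θts θs :=
    hmono.mem_Ioo_of_weighted_sum_eq_zero hmonot hθs hθts hθ hcrit hcritt horder ht hfoc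
  rw [hκconv.convexOn.iSup_mul_deriv_sub_eq hθ (hκdiff θ hθ),
    hκtconv.convexOn.iSup_mul_deriv_sub_eq hθ (hκtdiff θ hθ)]
  exact ⟨hθmem, hcrit ▸ (hmono.lt_iff_lt hθ hθs).2 hθmem.2,
    hcritt ▸ (hmonot.lt_iff_lt hθts hθ).2 hθmem.1, hfoc⟩
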